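/- For the two-level (spin-boson) coefficient with zero-temperature bath and linear spectral density, γ^{(1)}(ω,ω′,t) = α e^{i(ω′−ω)t/2} ∫₀^{ω_c} Ω [t sinc((ω′−Ω)t/2)][t sinc((ω−Ω)t/2)] dΩ with sharp cutoff ω_c > ω₀ > 0 satisfies: for ω = ω′ = ω₀ fixed, γ^{(1)}(ω₀,ω₀,t)/t → 2πα ω₀ as t → ∞. -/

import Mathlib

open MeasureTheory Filter Complex

noncomputable def sinc (x : ℝ) : ℝ := if x = 0 then 1 else Real.sin x / x

noncomputable def gammaCutoff (α ωc ω ω' t : ℝ) : ℂ :=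
  (α : ℂ) * Complex.exp (Complex.I * (ω' - ω) * t / 2) *
    ∫ Ω in (0:ℝ)..ωc, ((Ω : ℝ) : ℂ) *
      ((t : ℂ) * (sinc ((ω' - Ω) * t / 2) : ℝ)) *
      ((t : ℂ) * (sinc ((ω - Ω) * t / 2) : ℝ))

/-! After the substitution `u = (Ω - ω₀) t / 2`, `γ(ω₀, ω₀, t) / t` becomes
`2 α ∫ (ω₀ + 2u/t) sinc² u du` over an interval that grows to all of `ℝ`; by dominated convergence
this tends to `2 α ω₀ ∫ sinc² = 2 π α ω₀`. The value `∫ sinc² = π` is Fourier inversion at `0`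
for the tent function `max 0 (1 - |x|)`, whose Fourier transform is `sinc² (π ξ)`. -/

open scoped Real FourierTransform Topology

lemma sinc_eq_real_sinc : sinc = Real.sinc := rfl

noncomputable def tent (x : ℝ) : ℝ := max 0 (1 - |x|)

@[fun_prop]
lemma continuous_tent : Continuous tent := by
  unfold tent; fun_prop

lemma tent_of_one_le_abs {x : ℝ} (hx : 1 ≤ |x|) : tent x = 0 :=
  max_eq_left (sub_nonpos.mpr hx)

lemma tent_of_mem_Icc {x : ℝ} (hx : x ∈ Set.Icc (0:ℝ) 1) : tent x = 1 - x := by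
  rw [tent, abs_of_nonneg hx.1, max_eq_right (sub_nonneg.mpr hx.2)]

lemma tent_neg (x : ℝ) : tent (-x) = tent x := by
  rw [tent, tent, abs_neg]

lemma support_tent_subset : Function.support tent ⊆ Set.Ioo (-1) 1 := by
  intro x hx
  by_contra h
  exact hx (tent_of_one_le_abs (by rw [Set.mem_Ioo, ← abs_lt] at h; linarith))

lemma hasCompactSupport_tent : HasCompactSupport tent :=
  HasCompactSupport.of_support_subset_isCompact isCompact_Icc
    (support_tent_subset.trans Set.Ioo_subset_Icc_self)

namespace Real

lemma sinc_sq_le_two_div_one_add_sq (x : ℝ) : sinc x ^ 2 ≤ 2 / (1 + x ^ 2) := by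
  rcases eq_or_ne x 0 with rfl | hx
  · norm_num
  · rw [sinc_of_ne_zero hx, div_pow, div_le_div_iff₀ (by positivity) (by positivity)]
    nlinarith [sin_sq_le_one x, sin_sq_le_sq (x := x), sq_nonneg x]

lemma integrable_sinc_sq : Integrable fun x : ℝ => sinc x ^ 2 := by
  refine (integrable_inv_one_add_sq.const_mul 2).mono'
    (continuous_sinc.pow 2).aestronglyMeasurable (.of_forall fun x => ?_)
  rw [norm_pow, norm_eq_abs, sq_abs, ← div_eq_mul_inv]
  exact sinc_sq_le_two_div_one_add_sq x

lemma integral_cos_mul_one_sub (c : ℝ) :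
    ∫ v in (0:ℝ)..1, cos (c * v) * (1 - v) = sinc (c / 2) ^ 2 / 2 := by
  rcases eq_or_ne c 0 with rfl | hc
  · rw [intervalIntegral.integral_congr (g := fun v => 1 - v) fun v _ => by simp,
      intervalIntegral.integral_sub intervalIntegrable_const intervalIntegral.intervalIntegrable_id]
    norm_num [integral_id]
  have hF : ∀ v ∈ Set.uIcc (0:ℝ) 1, HasDerivAt
      (fun v => (1 - v) * sin (c * v) / c - cos (c * v) / c ^ 2) (cos (c * v) * (1 - v)) v :=
    fun v _ => (((((hasDerivAt_id v).const_sub 1).mul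
      ((hasDerivAt_id v).const_mul c).sin).div_const c).sub
      (((hasDerivAt_id v).const_mul c).cos.div_const (c ^ 2))).congr_deriv (by
        field_simp
        simp only [id]
        ring)
  have hcos : cos c = 1 - 2 * sin (c / 2) ^ 2 := by
    rw [← cos_two_mul_eq_one_sub, mul_div_cancel₀ c two_ne_zero]
  rw [intervalIntegral.integral_eq_sub_of_hasDerivAt hF
      ((by fun_prop : Continuous _).intervalIntegrable _ _),
    sinc_of_ne_zero (div_ne_zero hc two_ne_zero)]
  simp only [mul_one, mul_zero, sin_zero, cos_zero, hcos]
  field_simp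
  ring

lemma fourier_ofReal_tent (ξ : ℝ) :
    𝓕 (fun x => (tent x : ℂ)) ξ = ((sinc (π * ξ) ^ 2 : ℝ) : ℂ) := by
  set e : ℝ → ℂ := fun v => Complex.exp (↑(-2 * π * v * ξ) * Complex.I) • (tent v : ℂ)
  have he : Continuous e := by fun_prop
  have he_supp : Function.support e ⊆ Set.Ioc (-1) 1 :=
    fun v hv => Set.Ioo_subset_Ioc_self <| support_tent_subset fun h => hv (by simp [e, h])
  calc 𝓕 (fun x => (tent x : ℂ)) ξ = ∫ v in -1..1, e v := by
        rw [fourier_real_eq_integral_exp_smul,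
          intervalIntegral.integral_eq_integral_of_support_subset he_supp]
    _ = ∫ v in 0..1, (e v + e (-v)) := by
        rw [← intervalIntegral.integral_add_adjacent_intervals (b := 0)
          (he.intervalIntegrable _ _) (he.intervalIntegrable _ _),
          intervalIntegral.integral_add (g := fun v => e (-v)) (he.intervalIntegrable _ _)
            ((he.comp continuous_neg).intervalIntegrable _ _),
          intervalIntegral.integral_comp_neg, neg_zero, add_comm]
    _ = ∫ v in 0..1, ((2 * (cos (2 * π * ξ * v) * (1 - v)) : ℝ) : ℂ) := by
        refine intervalIntegral.integral_congr fun v hv => ?_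
        rw [Set.uIcc_of_le zero_le_one] at hv
        simp only [e, tent_neg, tent_of_mem_Icc hv, smul_eq_mul]
        push_cast
        rw [← mul_assoc, Complex.two_cos, add_mul]
        ring_nf
    _ = _ := by
        rw [intervalIntegral.integral_ofReal, intervalIntegral.integral_const_mul,
          integral_cos_mul_one_sub]
        push_cast
        ring_nf

lemma integral_sinc_pi_mul_sq : ∫ ξ : ℝ, sinc (π * ξ) ^ 2 = 1 := by
  have hfourier : 𝓕 (fun x => (tent x : ℂ)) = fun ξ => ((sinc (π * ξ) ^ 2 : ℝ) : ℂ) :=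
    funext fourier_ofReal_tent
  have htent : Integrable fun x => (tent x : ℂ) :=
    (continuous_tent.integrable_of_hasCompactSupport hasCompactSupport_tent).ofReal
  have hfourier_int : Integrable (𝓕 fun x => (tent x : ℂ)) := by
    rw [hfourier]
    exact (integrable_sinc_sq.comp_mul_left' pi_ne_zero).ofReal
  have hinv := htent.fourierInv_fourier_eq hfourier_int (v := 0) (by fun_prop)
  have htent_zero : tent 0 = 1 := by norm_num [tent]
  rw [fourierInv_eq, hfourier, htent_zero] at hinv
  simp only [inner_zero_right, AddChar.map_zero_eq_one, one_smul] at hinv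
  exact_mod_cast hinv

lemma integral_sinc_sq : ∫ x : ℝ, sinc x ^ 2 = π := by
  have h := Measure.integral_comp_mul_left (fun x : ℝ => sinc x ^ 2) π
  rw [integral_sinc_pi_mul_sq, abs_of_pos (inv_pos.mpr pi_pos), smul_eq_mul] at h
  field_simp at h
  linarith

lemma mapsTo_add_two_mul_div_Icc {a b ω₀ t : ℝ} (ht : 0 < t) :
    Set.MapsTo (fun u => ω₀ + 2 * u / t) (Set.Icc ((a - ω₀) * t / 2) ((b - ω₀) * t / 2))
      (Set.Icc a b) := by
  intro u ⟨hu₁, hu₂⟩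
  constructor
  · linarith [(le_div_iff₀ ht).mpr (by linarith : (a - ω₀) * t ≤ 2 * u)]
  · linarith [(div_le_iff₀ ht).mpr (by linarith : 2 * u ≤ (b - ω₀) * t)]

theorem tendsto_integral_comp_add_div_mul_sinc_sq {g : ℝ → ℝ} {a b ω₀ : ℝ}
    (hg : ContinuousOn g (Set.Icc a b)) (hω₀ : ω₀ ∈ Set.Ioo a b) :
    Tendsto (fun t => ∫ u in (a - ω₀) * t / 2..(b - ω₀) * t / 2, g (ω₀ + 2 * u / t) * sinc u ^ 2)
      atTop (𝓝 (π * g ω₀)) := by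
  obtain ⟨C, hC⟩ := isCompact_Icc.exists_bound_of_continuousOn hg
  set lo : ℝ → ℝ := fun t => (a - ω₀) * t / 2
  set hi : ℝ → ℝ := fun t => (b - ω₀) * t / 2
  set f : ℝ → ℝ → ℝ := fun t u => g (ω₀ + 2 * u / t) * sinc u ^ 2
  have hmaps : ∀ t > 0, Set.MapsTo (fun u => ω₀ + 2 * u / t) (Set.Ioc (lo t) (hi t))
      (Set.Icc a b) :=
    fun t ht => (mapsTo_add_two_mul_div_Icc ht).mono_left Set.Ioc_subset_Icc_self
  have hlo : Tendsto lo atTop atBot :=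
    (tendsto_id.const_mul_atTop_of_neg (sub_neg.mpr hω₀.1)).atBot_div_const two_pos
  have hhi : Tendsto hi atTop atTop :=
    (tendsto_id.const_mul_atTop (sub_pos.mpr hω₀.2)).atTop_div_const two_pos
  have hg₀ : ContinuousAt g ω₀ := hg.continuousAt (Icc_mem_nhds hω₀.1 hω₀.2)
  have hDCT : Tendsto (fun t => ∫ u, (Set.Ioc (lo t) (hi t)).indicator (f t) u) atTop
      (𝓝 (∫ u, g ω₀ * sinc u ^ 2)) := by
    refine tendsto_integral_filter_of_dominated_convergence (fun u => C * sinc u ^ 2) ?_ ?_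
      (integrable_sinc_sq.const_mul C) (.of_forall fun u => ?_)
    · filter_upwards [eventually_gt_atTop 0] with t ht
      refine (aestronglyMeasurable_indicator_iff measurableSet_Ioc).mpr ?_
      refine ContinuousOn.aestronglyMeasurable ?_ measurableSet_Ioc
      exact (hg.comp (by fun_prop) (hmaps t ht)).mul (continuous_sinc.pow 2).continuousOn
    · filter_upwards [eventually_gt_atTop 0] with t ht
      refine .of_forall fun u => ?_
      rw [norm_indicator_eq_indicator_norm]
      refine Set.indicator_apply_le' (fun hu => ?_) fun _ => ?_
      · rw [norm_mul, norm_pow, norm_eq_abs (sinc u), sq_abs]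
        exact mul_le_mul_of_nonneg_right (hC _ (hmaps t ht hu)) (sq_nonneg _)
      · exact mul_nonneg ((norm_nonneg _).trans (hC ω₀ (Set.Ioo_subset_Icc_self hω₀))) (sq_nonneg _)
    · have hmem : ∀ᶠ t in atTop, u ∈ Set.Ioc (lo t) (hi t) :=
        (hlo.eventually_lt_atBot u).and (hhi.eventually_ge_atTop u)
      refine Tendsto.congr' (hmem.mono fun t ht => (Set.indicator_of_mem ht _).symm) ?_
      have harg : Tendsto (fun t => ω₀ + 2 * u / t) atTop (𝓝 ω₀) := by
        simpa using tendsto_const_nhds (x := ω₀) |>.add <|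
          (tendsto_const_nhds (x := 2 * u)).div_atTop tendsto_id
      exact (hg₀.tendsto.comp harg).mul_const _
  rw [integral_const_mul, integral_sinc_sq, mul_comm] at hDCT
  refine hDCT.congr' ?_
  filter_upwards [eventually_gt_atTop 0] with t ht
  rw [integral_indicator measurableSet_Ioc, intervalIntegral.integral_of_le]
  exact div_le_div_of_nonneg_right (mul_le_mul_of_nonneg_right (by linarith [hω₀.1, hω₀.2]) ht.le)
    zero_le_two

theorem tendsto_mul_integral_mul_sinc_sq {g : ℝ → ℝ} {a b ω₀ : ℝ}
    (hg : ContinuousOn g (Set.Icc a b)) (hω₀ : ω₀ ∈ Set.Ioo a b) :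
    Tendsto (fun t => t * ∫ Ω in a..b, g Ω * sinc ((ω₀ - Ω) * t / 2) ^ 2)
      atTop (𝓝 (2 * π * g ω₀)) := by
  have h := (tendsto_integral_comp_add_div_mul_sinc_sq hg hω₀).const_mul 2
  rw [← mul_assoc] at h
  refine h.congr' ?_
  filter_upwards [eventually_gt_atTop 0] with t ht
  have hsubst := intervalIntegral.smul_integral_comp_mul_sub
    (fun u => g (ω₀ + 2 * u / t) * sinc u ^ 2) (a := a) (b := b) (t / 2) (t / 2 * ω₀)
  rw [smul_eq_mul] at hsubst
  rw [show (a - ω₀) * t / 2 = t / 2 * a - t / 2 * ω₀ by ring,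
    show (b - ω₀) * t / 2 = t / 2 * b - t / 2 * ω₀ by ring, ← hsubst, ← mul_assoc,
    mul_div_cancel₀ t two_ne_zero]
  refine congrArg (t * ·) (intervalIntegral.integral_congr fun Ω _ => ?_)
  have hΩ : ω₀ + 2 * (t / 2 * Ω - t / 2 * ω₀) / t = Ω := by field_simp; ring
  rw [hΩ, ← sinc_neg]
  ring_nf

end Real

lemma gammaCutoff_diag_div (α ωc ω₀ : ℝ) {t : ℝ} (ht : t ≠ 0) :
    gammaCutoff α ωc ω₀ ω₀ t / t =
      ((α * (t * ∫ Ω in (0:ℝ)..ωc, Ω * Real.sinc ((ω₀ - Ω) * t / 2) ^ 2) : ℝ) : ℂ) := by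
  have hintegrand : ∀ Ω : ℝ, (Ω : ℂ) * ((t : ℂ) * (Real.sinc ((ω₀ - Ω) * t / 2) : ℂ)) *
      ((t : ℂ) * (Real.sinc ((ω₀ - Ω) * t / 2) : ℂ)) =
      ((t ^ 2 * (Ω * Real.sinc ((ω₀ - Ω) * t / 2) ^ 2) : ℝ) : ℂ) := fun Ω => by
    push_cast; ring
  rw [gammaCutoff, sinc_eq_real_sinc, sub_self, mul_zero, zero_mul, zero_div, Complex.exp_zero,
    mul_one]
  simp only [hintegrand, intervalIntegral.integral_ofReal, intervalIntegral.integral_const_mul]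
  rw [div_eq_iff (ofReal_ne_zero.mpr ht)]
  push_cast
  ring

theorem cutoff_rate_tendsto_markovian_general (α ωc ω₀ : ℝ)
    (hω₀ : 0 < ω₀) (hc : ω₀ < ωc) :
    Tendsto (fun t : ℝ => gammaCutoff α ωc ω₀ ω₀ t / (t : ℂ)) atTop
      (nhds ((2 * Real.pi * α * ω₀ : ℝ) : ℂ)) := by
  have hlim := (Real.tendsto_mul_integral_mul_sinc_sq (g := fun Ω => Ω) (continuousOn_id' _)
    ⟨hω₀, hc⟩).const_mul α
  rw [show α * (2 * π * ω₀) = 2 * π * α * ω₀ by ring] at hlim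
  refine ((continuous_ofReal.tendsto _).comp hlim).congr' ?_
  filter_upwards [eventually_ne_atTop 0] with t ht
  exact (gammaCutoff_diag_div α ωc ω₀ ht).symm

theorem cutoff_rate_tendsto_markovian (α ωc ω₀ : ℝ)
    (hα : 0 < α) (hω₀ : 0 < ω₀) (hc : ω₀ < ωc) :
    Tendsto (fun t : ℝ => gammaCutoff α ωc ω₀ ω₀ t / (t : ℂ)) atTop
      (nhds ((2 * Real.pi * α * ω₀ : ℝ) : ℂ)) :=
  cutoff_rate_tendsto_markovian_general α ωc ω₀ hω₀ hc
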